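/- Let K be a compact Hausdorff topological group and let P be a closed subgroup of Aut(K), the group of all topological group automorphisms of K with the compact-open topology. Then the compact-open topology τ_co restricted to P is minimal within the class of π-uniform topologies on P; that is, every Hausdorff group topology σ on P which is coarser than τ_co and for which the natural evaluation action (P, σ) × K → K is π-uniform (with respect to the unique compatible uniformity on K) coincides with τ_co. -/

import Mathlib

open scoped Topology

/-- The group of self-homeomorphisms of `X`, with composition as multiplication:
`(f * g) x = f (g x)`, identity `Homeomorph.refl` and inverse `Homeomorph.symm`. -/
instance homeoGroup (X : Type*) [TopologicalSpace X] : Group (X ≃ₜ X) where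
  mul f g := g.trans f
  one := Homeomorph.refl X
  inv := Homeomorph.symm
  mul_assoc f g h := rfl
  one_mul f := rfl
  mul_one f := rfl
  inv_mul_cancel f := by ext x; exact f.symm_apply_apply x

/-- The compact-open topology on the homeomorphism group `H(X)`, induced from the
compact-open topology on `C(X, X)`. -/
def coTop (X : Type*) [TopologicalSpace X] : TopologicalSpace (X ≃ₜ X) :=
  TopologicalSpace.induced (fun f : X ≃ₜ X => (f : C(X, X))) ContinuousMap.compactOpen

/-- The unique uniformity compatible with the topology of a compact Hausdorff space. -/
def cptUnif (X : Type*) [TopologicalSpace X] [CompactSpace X] [T2Space X] :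
    Filter (X × X) :=
  @uniformity X uniformSpaceOfCompactR1

/-- An action `act` of a group `G` equipped with a topology `σ` on a set `X` equipped with a
uniformity (filter) `𝔅` is *π-uniform* if for every `g₀ ∈ G` and every entourage `ε ∈ 𝔅`
there exist an entourage `δ ∈ 𝔅` and a neighborhood `U` of `g₀` such that
`(g • x, g • y) ∈ ε` whenever `(x, y) ∈ δ` and `g ∈ U`. -/
def IsPiUniform {G X : Type*} (σ : TopologicalSpace G) (𝔅 : Filter (X × X))
    (act : G → X → X) : Prop :=
  ∀ g₀ : G, ∀ ε ∈ 𝔅, ∃ δ ∈ 𝔅, ∃ U ∈ @nhds G σ g₀,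
    ∀ g ∈ U, ∀ x y : X, (x, y) ∈ δ → (act g x, act g y) ∈ ε

/-- The group `Aut(G)` of all topological group automorphisms of a topological group `G`
(group automorphisms that are homeomorphisms), as a subgroup of the homeomorphism
group of `G`. -/
def topAut (G : Type*) [Group G] [TopologicalSpace G] : Subgroup (G ≃ₜ G) where
  carrier := {f : G ≃ₜ G | ∀ a b : G, f (a * b) = f a * f b}
  one_mem' := fun _ _ => rfl
  mul_mem' := by
    intro f g hf hg a b
    show f (g (a * b)) = f (g a) * f (g b)
    rw [hg, hf]
  inv_mem' := by
    intro f hf a b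
    show f.symm (a * b) = f.symm a * f.symm b
    apply f.injective
    rw [hf]
    simp

/-- The compact-open topology on `Aut(G)`. -/
def autTop (G : Type*) [Group G] [TopologicalSpace G] : TopologicalSpace ↥(topAut G) :=
  TopologicalSpace.induced (Subtype.val : ↥(topAut G) → G ≃ₜ G) (coTop G)

/-! Every ultrafilter `𝔘` converging to `p` for `σ` must converge to `p` in the compact-open
topology. As `K` is compact, `𝔘` converges pointwise to some `f : K → K`; π-uniformity at `p`
makes the automorphisms eventually uniformly equicontinuous along `𝔘`, so the convergence is
uniform and `f` is continuous. The same applies to the inverses, because inversion is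
`σ`-continuous, and the two limits compose to the identity; being a pointwise limit of
homomorphisms, `f` lies in `Aut(K)`, hence in the closed subgroup `P`. Then `𝔘 → f` in the
compact-open topology, hence in the coarser `σ`, and `f = p` since `σ` is Hausdorff. -/

open Filter Uniformity

theorem tendstoUniformly_of_eventually_uniformEquicontinuous {ι X α : Type*}
    [UniformSpace X] [CompactSpace X] [UniformSpace α] {F : ι → X → α} {f : X → α}
    {l : Filter ι} [l.NeBot]
    (hF : ∀ U ∈ 𝓤 α, ∃ V ∈ 𝓤 X, ∀ᶠ i in l, ∀ x y, (x, y) ∈ V → (F i x, F i y) ∈ U)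
    (hf : ∀ x, Tendsto (F · x) l (𝓝 (f x))) : TendstoUniformly F f l := by
  refine tendstoUniformlyOn_univ.1 <|
    UniformCauchySeqOn.tendstoUniformlyOn_of_tendsto (fun U hU => ?_) fun x _ => hf x
  obtain ⟨V, hV, hVsymm, hVU⟩ := comp_comp_symm_mem_uniformity_sets hU
  obtain ⟨δ, hδ, hFδ⟩ := hF V hV
  obtain ⟨A, hA⟩ := CompactSpace.elim_nhds_subcover (fun a => UniformSpace.ball a δ)
    fun a => UniformSpace.ball_mem_nhds a hδ
  have hAcauchy : ∀ᶠ ij : ι × ι in l ×ˢ l, ∀ a ∈ A, (F ij.1 a, F ij.2 a) ∈ V :=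
    (eventually_all_finset A).2 fun a _ => cauchy_map_iff'.1 (hf a).cauchy_map hV
  filter_upwards [hAcauchy, hFδ.prod_mk hFδ] with ⟨i, j⟩ hij ⟨hi, hj⟩ x _
  obtain ⟨a, ha, hxa⟩ := Set.mem_iUnion₂.1 (hA.symm.subset (Set.mem_univ x))
  exact hVU <| SetRel.prodMk_mem_comp
    (SetRel.prodMk_mem_comp (SetRel.symm V (hi a x hxa)) (hij a ha)) (hj a x hxa)

theorem IsPiUniform.exists_tendsto_of_le_nhds {G X : Type*} [TopologicalSpace X] [CompactSpace X]
    [T2Space X] {σ : TopologicalSpace G} {φ : G → C(X, X)}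
    (hφ : IsPiUniform σ (cptUnif X) fun g x => φ g x) {g₀ : G} {𝔘 : Ultrafilter G}
    (h𝔘 : ↑𝔘 ≤ @nhds G σ g₀) : ∃ F : C(X, X), Tendsto φ 𝔘 (𝓝 F) := by
  let _ : UniformSpace X := uniformSpaceOfCompactR1
  set f : X → X := fun x => (𝔘.map (φ · x)).lim
  have hunif : TendstoUniformly (fun g => ⇑(φ g)) f 𝔘 := by
    refine tendstoUniformly_of_eventually_uniformEquicontinuous (fun U hU => ?_)
      fun x => (𝔘.map (φ · x)).le_nhds_lim
    obtain ⟨δ, hδ, N, hN, hNδ⟩ := hφ g₀ U hU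
    exact ⟨δ, hδ, mem_of_superset (h𝔘 hN) hNδ⟩
  exact ⟨⟨f, hunif.continuous (.of_forall fun g => (φ g).continuous)⟩,
    ContinuousMap.tendsto_iff_tendstoUniformly.2 hunif⟩

theorem ContinuousMap.comp_eq_id_of_tendsto {ι X Y : Type*} [TopologicalSpace X]
    [TopologicalSpace Y] [LocallyCompactPair Y X] [T2Space X] {l : Filter ι} [l.NeBot]
    {f : ι → C(X, Y)} {g : ι → C(Y, X)} {F : C(X, Y)} {G : C(Y, X)}
    (hf : Tendsto f l (𝓝 F)) (hg : Tendsto g l (𝓝 G)) (hgf : ∀ i, (g i).comp (f i) = .id X) :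
    G.comp F = .id X :=
  tendsto_nhds_unique ((continuous_comp'.tendsto (F, G)).comp (hf.prodMk_nhds hg))
    (by simp only [Function.comp_def, hgf, tendsto_const_nhds])

section TopAut

variable {K : Type*} [Group K] [TopologicalSpace K]

theorem tendsto_nhds_autTop_iff {ι : Type*} {l : Filter ι} {φ : ι → topAut K} {A : topAut K} :
    Tendsto φ l (@nhds _ (autTop K) A) ↔
      Tendsto (fun i => ((φ i : K ≃ₜ K) : C(K, K))) l (𝓝 (A : K ≃ₜ K)) := by
  rw [autTop, @nhds_induced _ _ (coTop K), tendsto_comap_iff, coTop, nhds_induced,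
    tendsto_comap_iff]
  rfl

variable [ContinuousMul K] [LocallyCompactSpace K] [T2Space K]

theorem exists_tendsto_autTop_of_tendsto_of_tendsto_inv {ι : Type*} {l : Filter ι} [l.NeBot]
    {φ : ι → topAut K} {F H : C(K, K)} (hF : Tendsto (fun i => ((φ i : K ≃ₜ K) : C(K, K))) l (𝓝 F))
    (hH : Tendsto (fun i => (((φ i)⁻¹ : K ≃ₜ K) : C(K, K))) l (𝓝 H)) :
    ∃ A : topAut K, Tendsto φ l (@nhds _ (autTop K) A) := by
  have hHF := ContinuousMap.comp_eq_id_of_tendsto hH hF fun i =>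
    ContinuousMap.ext (φ i).1.apply_symm_apply
  have hFH := ContinuousMap.comp_eq_id_of_tendsto hF hH fun i =>
    ContinuousMap.ext (φ i).1.symm_apply_apply
  have hFx : ∀ x, Tendsto (fun i => (φ i : K ≃ₜ K) x) l (𝓝 (F x)) := fun x =>
    (continuous_eval_const x).tendsto F |>.comp hF
  have hFmul : ∀ a b, F (a * b) = F a * F b := fun a b =>
    tendsto_nhds_unique (hFx (a * b)) (by simpa only [(φ _).2 a b] using (hFx a).mul (hFx b))
  refine ⟨⟨⟨⟨F, H, DFunLike.congr_fun hFH, DFunLike.congr_fun hHF⟩, F.continuous, H.continuous⟩,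
    hFmul⟩, tendsto_nhds_autTop_iff.2 hF⟩

end TopAut

theorem compactOpen_minimal_piUniform_topAut {K : Type*}
    [Group K] [TopologicalSpace K] [IsTopologicalGroup K] [CompactSpace K] [T2Space K]
    (P : Subgroup ↥(topAut K))
    (hPclosed : IsClosed[autTop K] (P : Set ↥(topAut K)))
    (σ : TopologicalSpace ↥P)
    (hσgrp : @IsTopologicalGroup ↥P σ _) (hσT2 : @T2Space ↥P σ)
    (hcoarse : TopologicalSpace.induced (Subtype.val : ↥P → ↥(topAut K)) (autTop K) ≤ σ)
    (hπ : IsPiUniform σ (cptUnif K) (fun (p : ↥P) (x : K) => p.1.1 x)) :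
    σ = TopologicalSpace.induced (Subtype.val : ↥P → ↥(topAut K)) (autTop K) := by
  let _ := autTop K
  refine le_antisymm ((le_iff_nhds _ _).2 fun p => le_iff_ultrafilter.2 fun 𝔘 h𝔘 => ?_) hcoarse
  let ev : P → C(K, K) := fun g => g.1.1
  obtain ⟨F, hF⟩ := IsPiUniform.exists_tendsto_of_le_nhds (φ := ev) hπ h𝔘
  obtain ⟨H, hH⟩ := IsPiUniform.exists_tendsto_of_le_nhds (φ := ev) hπ
    (𝔘 := 𝔘.map (·⁻¹)) (continuous_inv.tendsto p |>.comp h𝔘)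
  obtain ⟨A, hA⟩ := exists_tendsto_autTop_of_tendsto_of_tendsto_inv (φ := Subtype.val) hF hH
  have hAP : A ∈ P := hPclosed.mem_of_tendsto hA (.of_forall fun g => g.2)
  have hτ : ↑𝔘 ≤ @nhds P (.induced Subtype.val (autTop K)) ⟨A, hAP⟩ := by
    rw [@nhds_induced _ _ (autTop K)]
    exact hA.le_comap
  obtain rfl : (⟨A, hAP⟩ : P) = p :=
    tendsto_nhds_unique (hτ.trans (nhds_mono hcoarse)) h𝔘
  exact hτ
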